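/- arXiv:1805.03158 — 8 statements merged into one kernel-verified Lean document; each statement's English description precedes it below -/
import Mathlib

section
/- Let s0 ≥ 1 be an integer. For all integers q ≥ 1, i with 1 ≤ i < 2^q, and x with 0 ≤ x < s0, writing e = ν₂(i), one has s0·2^(q−e−1) ≤ pos(i, x, q) < s0·2^(q−e). (In the terminology of the paper: the bucket number in chunk i of round q is native for round q − ν₂(i).) -/
/-- `pos s0 i x q = ⌊((s0 + x)·2^q + i) / 2^(ν₂(i)+1)⌋` where `ν₂` is the 2-adic valuation. -/
def pos (s0 i x q : ℕ) : ℕ := ((s0 + x) * 2 ^ q + i) / 2 ^ (padicValNat 2 i + 1)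

theorem stmt_3 (s0 : ℕ) (hs0 : 1 ≤ s0) :
    ∀ q : ℕ, 1 ≤ q → ∀ i : ℕ, 1 ≤ i → i < 2 ^ q → ∀ x : ℕ, x < s0 →
      s0 * 2 ^ (q - padicValNat 2 i - 1) ≤ pos s0 i x q ∧
        pos s0 i x q < s0 * 2 ^ (q - padicValNat 2 i) := by
  intro q hq i hi1 hi2 x hx
  set e := padicValNat 2 i with he
  have he_lt : e < q := by
    have h2e : 2 ^ e ≤ i := Nat.le_of_dvd (by omega) pow_padicValNat_dvd
    have h := lt_of_le_of_lt h2e hi2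
    exact (Nat.pow_lt_pow_iff_right (by norm_num)).mp h
  unfold pos
  rw [← he]
  constructor
  · rw [Nat.le_div_iff_mul_le (by positivity)]
    have h1 : s0 * 2 ^ (q - e - 1) * 2 ^ (e + 1) = s0 * 2 ^ q := by
      rw [mul_assoc, ← pow_add]
      congr 2
      omega
    rw [h1]
    nlinarith [pow_pos (show 0 < 2 by norm_num) q]
  · rw [Nat.div_lt_iff_lt_mul (by positivity)]
    have h1 : s0 * 2 ^ (q - e) * 2 ^ (e + 1) = 2 * (s0 * 2 ^ q) := by
      rw [mul_assoc, ← pow_add]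
      rw [show q - e + (e + 1) = q + 1 by omega, pow_succ]
      ring
    rw [h1]
    nlinarith [pow_pos (show 0 < 2 by norm_num) q]
end

section
/- Let s0 ≥ 1 be an integer and q ≥ 1. The map (i, x) ↦ pos(2i+1, x, q), defined for integers 0 ≤ i < 2^(q−1) and 0 ≤ x < s0, is a bijection from the set {0,…,2^(q−1)−1} × {0,…,s0−1} onto the set of integers {s0·2^(q−1), s0·2^(q−1)+1, …, s0·2^q − 1}. (The bucket numbers native to round q are exactly those in [s0·2^(q−1), s0·2^q), each occurring exactly once among the odd chunks.) -/
lemma pos_odd (s0 i x q : ℕ) (hq : 1 ≤ q) :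
    pos s0 (2 * i + 1) x q = (s0 + x) * 2 ^ (q - 1) + i := by
  have hv : padicValNat 2 (2 * i + 1) = 0 :=
    padicValNat.eq_zero_of_not_dvd (by omega)
  have hq' : 2 ^ q = 2 ^ (q - 1) * 2 := by
    rw [← pow_succ]; congr 1; omega
  rw [pos, hv, hq', pow_one]
  have h : (s0 + x) * (2 ^ (q - 1) * 2) + (2 * i + 1) = 2 * ((s0 + x) * 2 ^ (q - 1) + i) + 1 := by ring
  rw [h]
  omega

theorem stmt_5 (s0 : ℕ) (hs0 : 1 ≤ s0) (q : ℕ) (hq : 1 ≤ q) :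
    Set.BijOn (fun p : ℕ × ℕ => pos s0 (2 * p.1 + 1) p.2 q)
      (Set.Ico 0 (2 ^ (q - 1)) ×ˢ Set.Ico 0 s0)
      (Set.Ico (s0 * 2 ^ (q - 1)) (s0 * 2 ^ q)) := by
  have hq2 : s0 * 2 ^ q = 2 * s0 * 2 ^ (q - 1) := by
    have : 2 ^ q = 2 * 2 ^ (q - 1) := by
      rw [← pow_succ']; congr 1; omega
    rw [this]; ring
  have hP : ∀ p : ℕ × ℕ, p ∈ (Set.Ico 0 (2 ^ (q - 1)) ×ˢ Set.Ico 0 s0) ↔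
      p.1 < 2 ^ (q - 1) ∧ p.2 < s0 := by
    intro p
    simp [Set.mem_prod]
  constructor
  · -- MapsTo
    intro p hp
    rw [hP] at hp
    simp only [Set.mem_Ico, pos_odd s0 p.1 p.2 q hq, hq2]
    have h2 : (0:ℕ) < 2 ^ (q-1) := by positivity
    constructor
    · nlinarith
    · nlinarith
  constructor
  · -- InjOn
    intro p hp p' hp' heq
    rw [hP] at hp hp'
    simp only [pos_odd _ _ _ _ hq] at heq
    have h2 : (0:ℕ) < 2 ^ (q-1) := by positivity
    have hx : p.2 = p'.2 := by
      by_contra hne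
      rcases Nat.lt_or_ge p.2 p'.2 with h | h
      · nlinarith
      · have : p'.2 < p.2 := by omega
        nlinarith
    have : p.1 = p'.1 := by rw [hx] at heq; nlinarith
    exact Prod.ext this hx
  · -- SurjOn
    intro n hn
    simp only [Set.mem_Ico, hq2] at hn
    have h2 : (0:ℕ) < 2 ^ (q-1) := by positivity
    refine ⟨(n % 2 ^ (q-1), n / 2 ^ (q-1) - s0), ?_, ?_⟩
    · rw [hP]
      refine ⟨Nat.mod_lt _ h2, ?_⟩
      have h1 : s0 ≤ n / 2 ^ (q-1) := Nat.le_div_iff_mul_le h2 |>.mpr (by nlinarith)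
      have h2' : n / 2 ^ (q-1) < 2 * s0 := by
        rw [Nat.div_lt_iff_lt_mul h2]; nlinarith
      omega
    · simp only [pos_odd _ _ _ _ hq]
      have h1 : s0 ≤ n / 2 ^ (q-1) := Nat.le_div_iff_mul_le h2 |>.mpr (by nlinarith)
      have := Nat.div_add_mod n (2 ^ (q-1))
      have : (s0 + (n / 2 ^ (q-1) - s0)) = n / 2 ^ (q-1) := by omega
      rw [this]
      rw [Nat.mul_comm]
      exact Nat.div_add_mod n (2 ^ (q-1))
end

section
/- Let s0 ≥ 1 be an integer. For every integer q ≥ 0, the map P_q is a bijection from the set of integers {0, 1, …, s0·2^q − 1} onto itself. -/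
/-- The ideal round-mapping permutation `P_q` of round `q`. -/
def P (s0 q j : ℕ) : ℕ := if j < s0 then j else pos s0 (j / s0) (j % s0) q

lemma decomp (i : ℕ) (hi : 1 ≤ i) : ∃ k, i = (2 * k + 1) * 2 ^ (padicValNat 2 i) := by
  set e := padicValNat 2 i with he
  obtain ⟨m, hm⟩ := pow_padicValNat_dvd (p := 2) (n := i)
  have hnd : ¬ 2 ^ (e + 1) ∣ i :=
    pow_succ_padicValNat_not_dvd (by omega)
  have hmo : ¬ 2 ∣ m := by
    rintro ⟨c, hc⟩
    exact hnd ⟨c, by rw [hm, hc]; ring⟩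
  obtain ⟨k, hk⟩ : ∃ k, m = 2 * k + 1 := ⟨m / 2, by omega⟩
  exact ⟨k, by rw [hm, hk]; ring⟩

lemma val_eq (k e : ℕ) : padicValNat 2 ((2 * k + 1) * 2 ^ e) = e := by
  rw [padicValNat.mul (by omega) (by positivity), padicValNat.prime_pow,
    padicValNat.eq_zero_of_not_dvd (by omega), zero_add]

lemma pos_eq (s0 x q e k : ℕ) (h : e + 1 ≤ q) :
    pos s0 ((2 * k + 1) * 2 ^ e) x q = (s0 + x) * 2 ^ (q - e - 1) + k := by
  unfold pos
  rw [val_eq]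
  have h2 : (s0 + x) * 2 ^ q + (2 * k + 1) * 2 ^ e
      = 2 ^ (e + 1) * ((s0 + x) * 2 ^ (q - e - 1) + k) + 2 ^ e := by
    have : 2 ^ q = 2 ^ (e + 1) * 2 ^ (q - e - 1) := by
      rw [← pow_add]; congr 1; omega
    rw [this]; ring
  rw [h2, Nat.mul_add_div (by positivity),
    Nat.div_eq_of_lt (pow_lt_pow_right₀ (by norm_num) (by omega)), add_zero]

lemma P_ge (s0 q j : ℕ) (hs0 : 1 ≤ s0) (h1 : s0 ≤ j) (h2 : j < s0 * 2 ^ q) :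
    ∃ e k, e < q ∧ k < 2 ^ (q - e - 1) ∧ j = ((2 * k + 1) * 2 ^ e) * s0 + j % s0 ∧
      P s0 q j = (s0 + j % s0) * 2 ^ (q - e - 1) + k := by
  set i := j / s0 with hi
  have hi1 : 1 ≤ i := Nat.one_le_div_iff (by omega) |>.2 h1
  have hiq : i < 2 ^ q := Nat.div_lt_of_lt_mul h2
  obtain ⟨k, hk⟩ := decomp i hi1
  set e := padicValNat 2 i with he
  have hele : 2 ^ e ≤ i := Nat.le_of_dvd (by omega) ⟨2 * k + 1, by rw [hk]; ring⟩
  have heq : e < q := by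
    by_contra hc
    have : 2 ^ q ≤ 2 ^ e := Nat.pow_le_pow_right (by norm_num) (by omega)
    omega
  have hkb : k < 2 ^ (q - e - 1) := by
    have hsplit : 2 ^ q = 2 ^ e * (2 * 2 ^ (q - e - 1)) := by
      rw [← pow_succ']
      rw [← pow_add]; congr 1; omega
    rw [hk, hsplit] at hiq
    have h2e : 0 < 2 ^ e := by positivity
    nlinarith
  refine ⟨e, k, heq, hkb, ?_, ?_⟩
  · rw [← hk, hi]
    exact (Nat.div_add_mod' j s0).symm
  · rw [P, if_neg (by omega), ← hi, hk, pos_eq s0 _ q e k (by omega)]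

lemma dyadic_eq {s0 x1 x2 k1 k2 a b : ℕ} (hx1 : x1 < s0) (hx2 : x2 < s0)
    (hk1 : k1 < 2 ^ a) (hk2 : k2 < 2 ^ b)
    (h : (s0 + x1) * 2 ^ a + k1 = (s0 + x2) * 2 ^ b + k2) :
    a = b ∧ x1 = x2 ∧ k1 = k2 := by
  have hab : a = b := by
    rcases lt_trichotomy a b with hlt | heq | hgt
    · exfalso
      have hAB : 2 * 2 ^ a ≤ 2 ^ b := by
        rw [← pow_succ']
        exact Nat.pow_le_pow_right (by norm_num) (by omega)
      nlinarith
    · exact heq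
    · exfalso
      have hAB : 2 * 2 ^ b ≤ 2 ^ a := by
        rw [← pow_succ']
        exact Nat.pow_le_pow_right (by norm_num) (by omega)
      nlinarith
  subst hab
  have hA : 0 < 2 ^ a := by positivity
  have e1 : ((s0 + x1) * 2 ^ a + k1) / 2 ^ a = s0 + x1 := by
    rw [mul_comm, Nat.mul_add_div hA, Nat.div_eq_of_lt hk1, add_zero]
  have e2 : ((s0 + x2) * 2 ^ a + k2) / 2 ^ a = s0 + x2 := by
    rw [mul_comm, Nat.mul_add_div hA, Nat.div_eq_of_lt hk2, add_zero]
  have hx : x1 = x2 := by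
    have := congrArg (· / 2 ^ a) h
    rw [e1, e2] at this
    omega
  subst hx
  exact ⟨rfl, rfl, by omega⟩

theorem stmt_6 (s0 : ℕ) (hs0 : 1 ≤ s0) (q : ℕ) :
    Set.BijOn (P s0 q) (Set.Ico 0 (s0 * 2 ^ q)) (Set.Ico 0 (s0 * 2 ^ q)) := by
  have hone : 1 ≤ 2 ^ q := Nat.one_le_two_pow
  have hmaps : Set.MapsTo (P s0 q) (Set.Ico 0 (s0 * 2 ^ q)) (Set.Ico 0 (s0 * 2 ^ q)) := by
    intro j hj
    simp only [Set.mem_Ico] at hj ⊢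
    refine ⟨Nat.zero_le _, ?_⟩
    by_cases hlt : j < s0
    · rw [P, if_pos hlt]; nlinarith
    · obtain ⟨e, k, heq, hkb, _, hP⟩ := P_ge s0 q j hs0 (by omega) hj.2
      rw [hP]
      have hx : j % s0 < s0 := Nat.mod_lt _ (by omega)
      have hup : (s0 + j % s0) * 2 ^ (q - e - 1) + k < s0 * (2 * 2 ^ (q - e - 1)) := by
        nlinarith
      have hle : 2 * 2 ^ (q - e - 1) ≤ 2 ^ q := by
        rw [← pow_succ']
        exact Nat.pow_le_pow_right (by norm_num) (by omega)
      nlinarith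
  have hinj : Set.InjOn (P s0 q) (Set.Ico 0 (s0 * 2 ^ q)) := by
    intro j1 hj1 j2 hj2 hPeq
    simp only [Set.mem_Ico] at hj1 hj2
    by_cases h1 : j1 < s0 <;> by_cases h2 : j2 < s0
    · have hPj1 : P s0 q j1 = j1 := by rw [P, if_pos h1]
      have hPj2 : P s0 q j2 = j2 := by rw [P, if_pos h2]
      rwa [hPj1, hPj2] at hPeq
    · exfalso
      obtain ⟨e, k, heq, hkb, _, hP⟩ := P_ge s0 q j2 hs0 (by omega) hj2.2
      have hPj1 : P s0 q j1 = j1 := by rw [P, if_pos h1]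
      rw [hPj1, hP] at hPeq
      have hb : 1 ≤ 2 ^ (q - e - 1) := Nat.one_le_two_pow
      have : s0 * 1 ≤ (s0 + j2 % s0) * 2 ^ (q - e - 1) :=
        Nat.mul_le_mul (by omega) hb
      omega
    · exfalso
      obtain ⟨e, k, heq, hkb, _, hP⟩ := P_ge s0 q j1 hs0 (by omega) hj1.2
      have hPj2 : P s0 q j2 = j2 := by rw [P, if_pos h2]
      rw [hPj2, hP] at hPeq
      have hb : 1 ≤ 2 ^ (q - e - 1) := Nat.one_le_two_pow
      have : s0 * 1 ≤ (s0 + j1 % s0) * 2 ^ (q - e - 1) :=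
        Nat.mul_le_mul (by omega) hb
      omega
    · obtain ⟨e1, k1, he1, hk1, hj1e, hP1⟩ := P_ge s0 q j1 hs0 (by omega) hj1.2
      obtain ⟨e2, k2, he2, hk2, hj2e, hP2⟩ := P_ge s0 q j2 hs0 (by omega) hj2.2
      rw [hP1, hP2] at hPeq
      have hx1 : j1 % s0 < s0 := Nat.mod_lt _ (by omega)
      have hx2 : j2 % s0 < s0 := Nat.mod_lt _ (by omega)
      obtain ⟨hab, hx, hk⟩ := dyadic_eq hx1 hx2 hk1 hk2 hPeq
      have hee : e1 = e2 := by omega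
      rw [hj1e, hj2e, hx, hk, hee]
  exact ((Set.finite_Ico _ _).injOn_iff_bijOn_of_mapsTo hmaps).mp hinj
end

section
/- Let s0 ≥ 1 be an integer. For every integer q ≥ 1 and all integers i, x with 0 ≤ i < 2^(q−1) and 0 ≤ x < s0, one has P_q(2·s0·i + x) = P_{q−1}(s0·i + x); that is, the concatenation of the even-numbered chunks of the ideal permutation for round q reproduces exactly the ideal permutation for round q−1. -/
theorem stmt_7 (s0 : ℕ) (hs0 : 1 ≤ s0) :
    ∀ q : ℕ, 1 ≤ q → ∀ i : ℕ, i < 2 ^ (q - 1) → ∀ x : ℕ, x < s0 →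
      P s0 q (2 * s0 * i + x) = P s0 (q - 1) (s0 * i + x) := by
  intro q hq i hi x hx
  rcases Nat.eq_zero_or_pos i with rfl | hipos
  · simp [P, hx]
  · have hs0pos : 0 < s0 := hs0
    have hL : ¬ (2 * s0 * i + x < s0) := by nlinarith
    have hR : ¬ (s0 * i + x < s0) := by nlinarith
    have hdivL : (2 * s0 * i + x) / s0 = 2 * i := by
      rw [mul_comm 2 s0, mul_assoc, Nat.mul_add_div hs0pos, Nat.div_eq_of_lt hx]; ring
    have hmodL : (2 * s0 * i + x) % s0 = x := by
      rw [mul_comm 2 s0, mul_assoc, Nat.mul_add_mod, Nat.mod_eq_of_lt hx]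
    have hdivR : (s0 * i + x) / s0 = i := by
      rw [Nat.mul_add_div hs0pos, Nat.div_eq_of_lt hx]; ring
    have hmodR : (s0 * i + x) % s0 = x := by
      rw [Nat.mul_add_mod, Nat.mod_eq_of_lt hx]
    simp only [P, hL, hR, if_false, hdivL, hmodL, hdivR, hmodR, pos]
    have hval : padicValNat 2 (2 * i) = padicValNat 2 i + 1 := by
      rw [padicValNat.mul (by norm_num) (hipos.ne')]
      simp [padicValNat.self]
      ring
    rw [hval]
    have hq' : q = (q - 1) + 1 := (Nat.succ_pred_eq_of_pos hq).symm
    rw [hq']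
    have : (s0 + x) * 2 ^ (q - 1 + 1) + 2 * i = 2 * ((s0 + x) * 2 ^ (q - 1) + i) := by
      ring
    rw [this]
    simp only [Nat.add_sub_cancel]
    rw [show (2:ℕ) ^ (padicValNat 2 i + 1 + 1) = 2 * 2 ^ (padicValNat 2 i + 1) by ring]
    exact Nat.mul_div_mul_left _ _ (by norm_num : (0:ℕ) < 2)
end

section
/- Let s0 ≥ 1 be an integer. For all integers q ≥ 1, s with s0 ≤ s ≤ 2s0−1 and t with 0 ≤ t < 2^(q−1), setting m = s·2^(q−1) + t, the map F_{q,s,t+1} is obtained from F_{q,s,t} by inserting the new bucket number m at position t(s+1)+s; precisely: (a) F_{q,s,t+1}(j) = F_{q,s,t}(j) for all 0 ≤ j < t(s+1)+s; (b) F_{q,s,t+1}(t(s+1)+s) = m; (c) F_{q,s,t+1}(j) = F_{q,s,t}(j−1) for all t(s+1)+s < j ≤ m. -/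
/-- The intermediate round-mapping `F_{q,s,t}` of round `q`, step `s`,
after `t` buckets have been added in the current step. -/
def F (s0 q s t j : ℕ) : ℕ :=
  if j < t * (s + 1) then
    let i' := j / (s + 1)
    let r := j % (s + 1)
    if r < s0 then P s0 (q - 1) (s0 * i' + r) else pos s0 (2 * i' + 1) (r - s0) q
  else
    let i' := t + (j - t * (s + 1)) / s
    let r := (j - t * (s + 1)) % s
    if r < s0 then P s0 (q - 1) (s0 * i' + r) else pos s0 (2 * i' + 1) (r - s0) q

theorem stmt_9 (s0 : ℕ) (hs0 : 1 ≤ s0) (q s t : ℕ) (hq : 1 ≤ q)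
    (hs1 : s0 ≤ s) (hs2 : s ≤ 2 * s0 - 1) (ht : t < 2 ^ (q - 1)) :
    (∀ j, j < t * (s + 1) + s → F s0 q s (t + 1) j = F s0 q s t j) ∧
    F s0 q s (t + 1) (t * (s + 1) + s) = s * 2 ^ (q - 1) + t ∧
    (∀ j, t * (s + 1) + s < j → j ≤ s * 2 ^ (q - 1) + t →
      F s0 q s (t + 1) j = F s0 q s t (j - 1)) := by
  have hs : 0 < s := by omega
  have hts : (t + 1) * (s + 1) = t * (s + 1) + s + 1 := by ring
  refine ⟨?_, ?_, ?_⟩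
  · intro j hj
    by_cases h1 : j < t * (s + 1)
    · have h2 : j < (t + 1) * (s + 1) := by omega
      simp only [F, if_pos h1, if_pos h2]
    · push_neg at h1
      obtain ⟨r, hr, rfl⟩ : ∃ r, r < s ∧ j = t * (s + 1) + r :=
        ⟨j - t * (s + 1), by omega, by omega⟩
      have h2 : t * (s + 1) + r < (t + 1) * (s + 1) := by omega
      have hn : ¬ (t * (s + 1) + r < t * (s + 1)) := by omega
      have hd : (t * (s + 1) + r) / (s + 1) = t := by
        rw [Nat.add_comm, Nat.add_mul_div_right _ _ (by omega : 0 < s + 1),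
          Nat.div_eq_of_lt (by omega), Nat.zero_add]
      have hm : (t * (s + 1) + r) % (s + 1) = r := by
        rw [Nat.add_comm, Nat.add_mul_mod_self_right, Nat.mod_eq_of_lt (by omega)]
      have hd' : (t * (s + 1) + r - t * (s + 1)) = r := by omega
      simp only [F, if_pos h2, if_neg hn, hd, hm, hd', Nat.div_eq_of_lt hr,
        Nat.mod_eq_of_lt hr, Nat.add_zero]
  · have h2 : t * (s + 1) + s < (t + 1) * (s + 1) := by omega
    have hd : (t * (s + 1) + s) / (s + 1) = t := by
      rw [Nat.add_comm, Nat.add_mul_div_right _ _ (by omega : 0 < s + 1),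
        Nat.div_eq_of_lt (by omega), Nat.zero_add]
    have hm : (t * (s + 1) + s) % (s + 1) = s := by
      rw [Nat.add_comm, Nat.add_mul_mod_self_right, Nat.mod_eq_of_lt (by omega)]
    have hns0 : ¬ (s < s0) := by omega
    simp only [F, if_pos h2, hd, hm, if_neg hns0, pos]
    have hval : padicValNat 2 (2 * t + 1) = 0 :=
      padicValNat.eq_zero_of_not_dvd (by omega)
    rw [hval]
    have hss : s0 + (s - s0) = s := by omega
    have hq2 : 2 ^ q = 2 ^ (q - 1) * 2 := by
      rw [← pow_succ]; congr 1; omega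
    rw [hss, hq2, pow_one]
    have : s * (2 ^ (q - 1) * 2) + (2 * t + 1) = 2 * (s * 2 ^ (q - 1) + t) + 1 := by ring
    rw [this]
    omega
  · intro j hj hj2
    have h1 : ¬ (j < (t + 1) * (s + 1)) := by omega
    have h2 : ¬ (j - 1 < t * (s + 1)) := by omega
    have ha : j - (t + 1) * (s + 1) + s = j - 1 - t * (s + 1) := by omega
    simp only [F, if_neg h1, if_neg h2, ← ha, Nat.add_div_right _ hs, Nat.add_mod_right]
    ring_nf
end

section
/- Let s0 ≥ 1 be an integer. For every integer q ≥ 1 and every integer j with 0 ≤ j < s0·2^q, one has F_{q, 2s0−1, 2^(q−1)}(j) = P_q(j); that is, at the end of the last step of round q the intermediate round-mapping coincides with the ideal permutation of round q. -/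
lemma padic_two_mul (i : ℕ) (hi : i ≠ 0) :
    padicValNat 2 (2 * i) = padicValNat 2 i + 1 := by
  rw [padicValNat.mul (by norm_num) hi, padicValNat.self (by norm_num)]
  omega

theorem stmt_10 (s0 : ℕ) (hs0 : 1 ≤ s0) (q : ℕ) (hq : 1 ≤ q) :
    ∀ j : ℕ, j < s0 * 2 ^ q →
      F s0 q (2 * s0 - 1) (2 ^ (q - 1)) j = P s0 q j := by
  intro j hj
  have hs1 : 2 * s0 - 1 + 1 = 2 * s0 := by omega
  have hpowq : 2 ^ q = 2 ^ (q - 1) * 2 := by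
    rw [← pow_succ]; congr 1; omega
  have hjlt : j < 2 ^ (q - 1) * (2 * s0 - 1 + 1) := by
    rw [hs1]
    calc j < s0 * 2 ^ q := hj
    _ = 2 ^ (q - 1) * (2 * s0) := by rw [hpowq]; ring
  unfold F
  rw [if_pos hjlt, hs1]
  obtain ⟨i', r, hjeq, hrlt, hdi, hmr⟩ :
      ∃ i' r, j = 2 * s0 * i' + r ∧ r < 2 * s0 ∧ j / (2 * s0) = i' ∧ j % (2 * s0) = r :=
    ⟨j / (2 * s0), j % (2 * s0), (Nat.div_add_mod j (2 * s0)).symm,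
      Nat.mod_lt _ (by omega), rfl, rfl⟩
  rw [hdi, hmr]
  by_cases hrs : r < s0
  · rw [if_pos hrs]
    by_cases hi0 : i' = 0
    · have hjr : j = r := by simpa [hi0] using hjeq
      unfold P
      rw [if_pos (show s0 * i' + r < s0 by simp [hi0]; exact hrs),
        if_pos (show j < s0 by omega)]
      simp [hi0]; omega
    · have hle : s0 * 1 ≤ s0 * i' := Nat.mul_le_mul_left s0 (by omega)
      have hle2 : 2 * s0 * 1 ≤ 2 * s0 * i' := Nat.mul_le_mul_left (2 * s0) (by omega)
      have h1 : ¬ s0 * i' + r < s0 := by omega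
      have h2 : ¬ j < s0 := by omega
      unfold P
      rw [if_neg h1, if_neg h2]
      have hd1 : (s0 * i' + r) / s0 = i' := by
        rw [Nat.mul_add_div (by omega)]
        simp [Nat.div_eq_of_lt hrs]
      have hm1 : (s0 * i' + r) % s0 = r := by
        rw [Nat.mul_add_mod, Nat.mod_eq_of_lt hrs]
      have hjeq' : j = s0 * (2 * i') + r := by rw [hjeq]; ring
      have hd2 : j / s0 = 2 * i' := by
        rw [hjeq', Nat.mul_add_div (by omega)]
        simp [Nat.div_eq_of_lt hrs]
      have hm2 : j % s0 = r := by
        rw [hjeq', Nat.mul_add_mod, Nat.mod_eq_of_lt hrs]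
      rw [hd1, hm1, hd2, hm2]
      unfold pos
      rw [padic_two_mul i' hi0]
      have hnum : (s0 + r) * 2 ^ q + 2 * i' = 2 * ((s0 + r) * 2 ^ (q - 1) + i') := by
        rw [hpowq]; ring
      have hden : 2 ^ (padicValNat 2 i' + 1 + 1) = 2 * 2 ^ (padicValNat 2 i' + 1) := by
        rw [pow_succ]; ring
      rw [hnum, hden, Nat.mul_div_mul_left _ _ (by norm_num)]
  · rw [if_neg hrs]
    have h2 : ¬ j < s0 := by omega
    unfold P
    rw [if_neg h2]
    have hkey : s0 * (2 * i' + 1) = 2 * s0 * i' + s0 := by ring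
    have hjeq2 : j = s0 * (2 * i' + 1) + (r - s0) := by omega
    have hd : j / s0 = 2 * i' + 1 := by
      rw [hjeq2, Nat.mul_add_div (by omega)]
      simp [Nat.div_eq_of_lt (show r - s0 < s0 by omega)]
    have hm : j % s0 = r - s0 := by
      rw [hjeq2, Nat.mul_add_mod, Nat.mod_eq_of_lt (by omega)]
    rw [hd, hm]
end

section
/- Let s > 0 and ε ≥ 0 be real numbers with ε·s ≤ 1. Then for every real t with ε ≤ t ≤ 1/s, one has (1 − s·t)·(t − ε)/(1 + t) ≤ 1 + ε·s − 2s·(√((1 + 1/s)(1 + ε)) − 1). -/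
theorem stmt_15 (s ε : ℝ) (hs : 0 < s) (hε : 0 ≤ ε) (hεs : ε * s ≤ 1) :
    ∀ t : ℝ, ε ≤ t → t ≤ 1 / s →
      (1 - s * t) * (t - ε) / (1 + t) ≤
        1 + ε * s - 2 * s * (Real.sqrt ((1 + 1 / s) * (1 + ε)) - 1) := by
  intro t ht1 ht2
  have hu : 0 < 1 + t := by linarith
  set x := Real.sqrt ((1 + 1 / s) * (1 + ε)) with hx
  have hA : (0:ℝ) ≤ (1 + 1 / s) * (1 + ε) := by positivity
  have hsq : x ^ 2 = (1 + 1 / s) * (1 + ε) := Real.sq_sqrt hA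
  have h1 : s * (1 + 1 / s) = 1 + s := by
    field_simp; ring
  have hsA : s * ((1 + 1 / s) * (1 + ε)) = (1 + s) * (1 + ε) := by
    rw [← mul_assoc, h1]
  rw [div_le_iff₀ hu]
  nlinarith [mul_nonneg hs.le (sq_nonneg ((1 + t) - x)), hsq, hsA, hs, hu]
end

section
/- Let 0 < ε < 1 be a real number, and define g(s) = 1 + ε·s − 2s·(√((1 + 1/s)(1 + ε)) − 1) for real s > 0. Then g is nonincreasing on the interval (0, 1/ε]: for all real s1, s2 with 0 < s1 ≤ s2 ≤ 1/ε, one has g(s2) ≤ g(s1). -/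
/-!
Writing `s * √((1 + 1/s)(1 + ε)) = √(1 + ε) * √(s(s + 1))`, the function is
`1 + (ε + 2) s - 2 √(1 + ε) √(s(s + 1))`, so it suffices that `√(s(s + 1))` grows at least at
rate `(ε + 2) / (2 √(1 + ε))`. Its slope is `(2s + 1) / (2 √(s(s + 1)))`, and squaring turns the
comparison into `ε² s (s + 1) ≤ 1 + ε`, which holds as soon as `ε s ≤ 1`.
-/

open Real

lemma mul_sqrt_one_add_inv_mul {s : ℝ} (hs : 0 < s) (t : ℝ) :
    s * √((1 + 1 / s) * t) = √(s * (s + 1)) * √t := by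
  have hsq : s * (s + 1) * t = s ^ 2 * ((1 + 1 / s) * t) := by field_simp
  rw [← sqrt_mul (by positivity), hsq, sqrt_mul (sq_nonneg s), sqrt_sq hs.le]

lemma add_two_mul_sqrt_le {ε s : ℝ} (hε : 0 ≤ ε) (hs : 0 ≤ s) (hεs : ε * s ≤ 1) :
    (ε + 2) * √(s * (s + 1)) ≤ √(1 + ε) * (2 * s + 1) := by
  rw [← pow_le_pow_iff_left₀ (by positivity) (by positivity) two_ne_zero, mul_pow, mul_pow,
    sq_sqrt (by positivity), sq_sqrt (by positivity)]
  nlinarith [mul_le_mul hεs hεs (by positivity) zero_le_one, mul_le_mul_of_nonneg_left hεs hε]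

lemma add_two_mul_sub_le_sqrt_sub {ε s₁ s₂ : ℝ} (hε : 0 ≤ ε) (hs₁ : 0 < s₁) (h₁₂ : s₁ ≤ s₂)
    (hεs₂ : ε * s₂ ≤ 1) :
    (ε + 2) * (s₂ - s₁) ≤ 2 * √(1 + ε) * (√(s₂ * (s₂ + 1)) - √(s₁ * (s₁ + 1))) := by
  set a := √(s₁ * (s₁ + 1))
  set b := √(s₂ * (s₂ + 1))
  have ha : 0 < a := sqrt_pos.mpr (by positivity)
  have hs₂ : 0 < s₂ := hs₁.trans_le h₁₂
  have hb : 0 ≤ b := sqrt_nonneg _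
  have hεs₁ : ε * s₁ ≤ 1 := (mul_le_mul_of_nonneg_left h₁₂ hε).trans hεs₂
  have hka := add_two_mul_sqrt_le hε hs₁.le hεs₁
  have hkb := add_two_mul_sqrt_le hε hs₂.le hεs₂
  -- `b - a = (s₂ - s₁)(s₁ + s₂ + 1) / (a + b)`: bound the denominator using the two slope bounds.
  have hdiff : (b - a) * (a + b) = (s₂ - s₁) * (s₁ + s₂ + 1) := by
    have haa : a ^ 2 = s₁ * (s₁ + 1) := sq_sqrt (by positivity)
    have hbb : b ^ 2 = s₂ * (s₂ + 1) := sq_sqrt (by positivity)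
    linear_combination hbb - haa
  refine le_of_mul_le_mul_right ?_ (add_pos_of_pos_of_nonneg ha hb)
  calc (ε + 2) * (s₂ - s₁) * (a + b)
      = ((ε + 2) * a + (ε + 2) * b) * (s₂ - s₁) := by ring
    _ ≤ (√(1 + ε) * (2 * s₁ + 1) + √(1 + ε) * (2 * s₂ + 1)) * (s₂ - s₁) :=
        mul_le_mul_of_nonneg_right (add_le_add hka hkb) (sub_nonneg.mpr h₁₂)
    _ = 2 * √(1 + ε) * (b - a) * (a + b) := by rw [mul_assoc _ (b - a), hdiff]; ring

theorem stmt_17_general (ε : ℝ) (hε0 : 0 < ε) :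
    ∀ s1 s2 : ℝ, 0 < s1 → s1 ≤ s2 → s2 ≤ 1 / ε →
      1 + ε * s2 - 2 * s2 * (Real.sqrt ((1 + 1 / s2) * (1 + ε)) - 1) ≤
        1 + ε * s1 - 2 * s1 * (Real.sqrt ((1 + 1 / s1) * (1 + ε)) - 1) := by
  intro s1 s2 hs1 h12 h2ε
  have hεs2 : ε * s2 ≤ 1 := by rwa [le_div_iff₀ hε0, mul_comm] at h2ε
  have hinc := add_two_mul_sub_le_sqrt_sub hε0.le hs1 h12 hεs2
  have h1 := mul_sqrt_one_add_inv_mul hs1 (1 + ε)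
  have h2 := mul_sqrt_one_add_inv_mul (hs1.trans_le h12) (1 + ε)
  linarith

theorem stmt_17 (ε : ℝ) (hε0 : 0 < ε) (hε1 : ε < 1) :
    ∀ s1 s2 : ℝ, 0 < s1 → s1 ≤ s2 → s2 ≤ 1 / ε →
      1 + ε * s2 - 2 * s2 * (Real.sqrt ((1 + 1 / s2) * (1 + ε)) - 1) ≤
        1 + ε * s1 - 2 * s1 * (Real.sqrt ((1 + 1 / s1) * (1 + ε)) - 1) :=
  stmt_17_general ε hε0
end
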